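/- arXiv:2510.04453 — 4 statements merged into one kernel-verified Lean document; each statement's English description precedes it below -/
import Mathlib

section
/- Let A_1,...,A_n be events in a probability space, and for each i let Γ(i) ⊆ [n]\{i} be a set of indices. Suppose there is a constant c ≥ 1 and real numbers x_i ∈ [0, 1/c) such that (1) for every i and every S ⊆ [n]\(Γ(i) ∪ {i}), P(A_i | ⋀_{j∈S} A_j^c) ≤ c·P(A_i), and (2) P(A_i) ≤ x_i · ∏_{j∈Γ(i)} (1 − c·x_j). Then P(⋀_{i=1}^n A_i^c) ≥ ∏_{i=1}^n (1 − c·x_i). -/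
/-!
For `i ∉ S`, induction on `S` proves `P(A i ∩ ⋂_{j ∈ S} (A j)ᶜ) ≤ c x_i P(⋂_{j ∈ S} (A j)ᶜ)`.
Write `S₁ = S ∩ Γ i` and `S₂ = S \ Γ i`. Forgetting the events of `S₁` and applying the lopsided
condition bounds the left side by `c P(A i) P(⋂_{S₂})`. Putting the events of `S₁` back one at a
time costs a factor of at least `1 - c x_j` per event, by the induction hypothesis, and
`P(A i) ≤ x_i ∏_{Γ i} (1 - c x_j)` pays for that. With `S = ∅, {0}, {0, 1}, …` the same
one-event step gives the product bound.
-/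

open MeasureTheory Finset

-- Also covers `v = 0`, where `u / v = 0`: a conditional probability bound multiplied out.
lemma le_mul_of_div_le_of_le {u v a : ℝ} (hu : 0 ≤ u) (huv : u ≤ v) (h : u / v ≤ a) :
    u ≤ a * v := by
  rcases (hu.trans huv).lt_or_eq with hv | hv
  · exact (div_le_iff₀ hv).mp h
  · simpa [← hv] using huv

lemma one_sub_mul_pos_of_mem_Ico {c x : ℝ} (hx : x ∈ Set.Ico 0 (1 / c)) : 0 < 1 - c * x := by
  have hc : 0 < c := one_div_pos.mp (hx.1.trans_lt hx.2)
  have : c * x < 1 := by simpa [hc.ne'] using mul_lt_mul_of_pos_left hx.2 hc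
  linarith

theorem Finset.prod_mul_le_of_forall_insert {ι : Type*} [DecidableEq ι] {f : ι → ℝ}
    {p : Finset ι → ℝ} {R T : Finset ι} (hf : ∀ a ∈ T, 0 ≤ f a)
    (hstep : ∀ a ∈ T, ∀ U ⊆ T, a ∉ U → f a * p (R ∪ U) ≤ p (insert a (R ∪ U))) :
    (∏ a ∈ T, f a) * p R ≤ p (R ∪ T) := by
  induction T using Finset.induction_on with
  | empty => simp
  | insert a T ha ih =>
    have ih' := ih (fun b hb => hf b (mem_insert_of_mem hb))
      (fun b hb U hU hbU => hstep b (mem_insert_of_mem hb) U (hU.trans (subset_insert a T)) hbU)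
    calc (∏ b ∈ insert a T, f b) * p R = f a * ((∏ b ∈ T, f b) * p R) := by
          rw [prod_insert ha, mul_assoc]
      _ ≤ f a * p (R ∪ T) := mul_le_mul_of_nonneg_left ih' (hf a (mem_insert_self a T))
      _ ≤ p (R ∪ insert a T) := by
          rw [union_insert]
          exact hstep a (mem_insert_self a T) T (subset_insert a T) ha

def noneOf {Ω ι : Type*} (A : ι → Set Ω) (S : Finset ι) : Set Ω := ⋂ j ∈ S, (A j)ᶜ

section noneOf

variable {Ω ι : Type*} (A : ι → Set Ω)

@[simp] lemma noneOf_empty : noneOf A ∅ = Set.univ := by simp [noneOf]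

lemma noneOf_insert [DecidableEq ι] (i : ι) (S : Finset ι) :
    noneOf A (insert i S) = (A i)ᶜ ∩ noneOf A S :=
  set_biInter_insert i S _

lemma noneOf_anti : Antitone (noneOf A) :=
  fun _ _ h => Set.biInter_subset_biInter_left h

variable [MeasurableSpace Ω] (μ : Measure Ω)

lemma measureReal_noneOf_le [DecidableEq ι] (i : ι) (S : Finset ι) :
    μ.real (noneOf A S) ≤ μ.real (A i ∩ noneOf A S) + μ.real (noneOf A (insert i S)) := by
  calc μ.real (noneOf A S) = μ.real (A i ∩ noneOf A S ∪ (A i)ᶜ ∩ noneOf A S) := by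
        rw [← Set.union_inter_distrib_right, Set.union_compl_self, Set.univ_inter]
    _ ≤ _ := by rw [noneOf_insert]; exact measureReal_union_le _ _

lemma one_sub_mul_measureReal_noneOf_le [DecidableEq ι] {i : ι} {S : Finset ι} {y : ℝ}
    (h : μ.real (A i ∩ noneOf A S) ≤ y * μ.real (noneOf A S)) :
    (1 - y) * μ.real (noneOf A S) ≤ μ.real (noneOf A (insert i S)) := by
  have := measureReal_noneOf_le A μ i S
  linarith

end noneOf

theorem measureReal_inter_noneOf_le {Ω ι : Type*} [MeasurableSpace Ω] [DecidableEq ι]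
    (μ : Measure Ω) [IsFiniteMeasure μ] (A : ι → Set Ω) (Γ : ι → Finset ι) {c : ℝ} {x : ι → ℝ}
    (hx : ∀ i, x i ∈ Set.Ico 0 (1 / c))
    (hcond : ∀ i S, i ∉ S → (∀ j ∈ S, j ∉ Γ i) →
      μ.real (A i ∩ noneOf A S) ≤ c * μ.real (A i) * μ.real (noneOf A S))
    (hbound : ∀ i, μ.real (A i) ≤ x i * ∏ j ∈ Γ i, (1 - c * x j))
    (S : Finset ι) (i : ι) (hi : i ∉ S) :
    μ.real (A i ∩ noneOf A S) ≤ c * x i * μ.real (noneOf A S) := by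
  induction S using Finset.strongInduction generalizing i with
  | H S ih =>
  have hc : 0 < c := one_div_pos.mp ((hx i).1.trans_lt (hx i).2)
  have hfac : ∀ j, 0 ≤ 1 - c * x j := fun j => (one_sub_mul_pos_of_mem_Ico (hx j)).le
  have hchain : (∏ j ∈ S ∩ Γ i, (1 - c * x j)) * μ.real (noneOf A (S \ Γ i))
      ≤ μ.real (noneOf A S) := by
    have := prod_mul_le_of_forall_insert (R := S \ Γ i) (T := S ∩ Γ i)
      (p := fun T => μ.real (noneOf A T)) (fun j _ => hfac j) fun a ha U hU haU => by
        refine one_sub_mul_measureReal_noneOf_le A μ (ih _ ?_ a ?_)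
        · exact (ssubset_iff_of_subset (by grind)).2 ⟨a, mem_of_mem_inter_left ha, by grind⟩
        · grind
    rwa [sdiff_union_inter] at this
  have hprod : ∏ j ∈ Γ i, (1 - c * x j) ≤ ∏ j ∈ S ∩ Γ i, (1 - c * x j) :=
    prod_le_prod_of_subset_of_le_one inter_subset_right (fun j _ => hfac j)
      fun j _ _ => by linarith [mul_nonneg hc.le (hx j).1]
  calc μ.real (A i ∩ noneOf A S) ≤ μ.real (A i ∩ noneOf A (S \ Γ i)) :=
        measureReal_mono (Set.inter_subset_inter_right _ (noneOf_anti A sdiff_subset))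
    _ ≤ c * μ.real (A i) * μ.real (noneOf A (S \ Γ i)) :=
        hcond i _ (fun h => hi (mem_sdiff.1 h).1) fun j hj => (mem_sdiff.1 hj).2
    _ ≤ c * (x i * ∏ j ∈ S ∩ Γ i, (1 - c * x j)) * μ.real (noneOf A (S \ Γ i)) := by
        gcongr
        exact (hbound i).trans (mul_le_mul_of_nonneg_left hprod (hx i).1)
    _ = c * x i * ((∏ j ∈ S ∩ Γ i, (1 - c * x j)) * μ.real (noneOf A (S \ Γ i))) := by ring
    _ ≤ c * x i * μ.real (noneOf A S) :=
        mul_le_mul_of_nonneg_left hchain (mul_nonneg hc.le (hx i).1)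

theorem generalized_lopsided_LLL_general
    {Ω : Type*} [MeasurableSpace Ω] (μ : Measure Ω) [IsProbabilityMeasure μ]
    {n : ℕ} (A : Fin n → Set Ω)
    (Γ : Fin n → Finset (Fin n))
    (c : ℝ) (x : Fin n → ℝ) (hx : ∀ i, x i ∈ Set.Ico (0 : ℝ) (1 / c))
    (hcond : ∀ i (S : Finset (Fin n)), i ∉ S → (∀ j ∈ S, j ∉ Γ i) →
      (μ (A i ∩ ⋂ j ∈ S, (A j)ᶜ)).toReal / (μ (⋂ j ∈ S, (A j)ᶜ)).toReal
        ≤ c * (μ (A i)).toReal)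
    (hbound : ∀ i, (μ (A i)).toReal ≤ x i * ∏ j ∈ Γ i, (1 - c * x j)) :
    (μ (⋂ i, (A i)ᶜ)).toReal ≥ ∏ i, (1 - c * x i) := by
  have hmul (i : Fin n) (S : Finset (Fin n)) (hi : i ∉ S) (hS : ∀ j ∈ S, j ∉ Γ i) :
      μ.real (A i ∩ noneOf A S) ≤ c * μ.real (A i) * μ.real (noneOf A S) :=
    le_mul_of_div_le_of_le measureReal_nonneg (measureReal_mono Set.inter_subset_right)
      (hcond i S hi hS)
  have hkey := measureReal_inter_noneOf_le μ A Γ hx hmul hbound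
  have := prod_mul_le_of_forall_insert (R := ∅) (T := univ)
    (p := fun S => μ.real (noneOf A S)) (fun j _ => (one_sub_mul_pos_of_mem_Ico (hx j)).le)
    fun a _ U _ haU => one_sub_mul_measureReal_noneOf_le A μ (hkey _ a (by simpa using haU))
  simpa [noneOf, measureReal_def] using this

/-- Generalized lopsided Lovász local lemma. -/
theorem generalized_lopsided_LLL
    {Ω : Type*} [MeasurableSpace Ω] (μ : Measure Ω) [IsProbabilityMeasure μ]
    {n : ℕ} (A : Fin n → Set Ω) (hA : ∀ i, MeasurableSet (A i))
    (Γ : Fin n → Finset (Fin n)) (hΓ : ∀ i, i ∉ Γ i)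
    (c : ℝ) (hc : 1 ≤ c) (x : Fin n → ℝ) (hx : ∀ i, x i ∈ Set.Ico (0 : ℝ) (1 / c))
    (hcond : ∀ i (S : Finset (Fin n)), i ∉ S → (∀ j ∈ S, j ∉ Γ i) →
      (μ (A i ∩ ⋂ j ∈ S, (A j)ᶜ)).toReal / (μ (⋂ j ∈ S, (A j)ᶜ)).toReal
        ≤ c * (μ (A i)).toReal)
    (hbound : ∀ i, (μ (A i)).toReal ≤ x i * ∏ j ∈ Γ i, (1 - c * x j)) :
    (μ (⋂ i, (A i)ᶜ)).toReal ≥ ∏ i, (1 - c * x i) :=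
  generalized_lopsided_LLL_general μ A Γ c x hx hcond hbound
end

section
/- Let A_1,...,A_n be events and x_i ∈ [0,1) real numbers such that each A_i is independent from the collection {A_j : j ∈ [n]\({i} ∪ Γ(i))} and P(A_i) ≤ x_i ∏_{j∈Γ(i)} (1 − x_j) for all i. Then P(⋀_{i=1}^n A_i^c) ≥ ∏_{i=1}^n (1 − x_i). -/
open MeasureTheory

section LLLaux

variable {Ω : Type*} [MeasurableSpace Ω] (μ : Measure Ω) [IsProbabilityMeasure μ]
  {n : ℕ} (A : Fin n → Set Ω)

private lemma LLL_fsplit (hA : ∀ i, MeasurableSet (A i)) (i : Fin n) (S : Finset (Fin n)) :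
    (μ (A i ∩ ⋂ j ∈ S, (A j)ᶜ)).toReal + (μ (⋂ j ∈ insert i S, (A j)ᶜ)).toReal
      = (μ (⋂ j ∈ S, (A j)ᶜ)).toReal := by
  have h1 : (⋂ j ∈ insert i S, (A j)ᶜ) = (⋂ j ∈ S, (A j)ᶜ) \ A i := by
    rw [Finset.set_biInter_insert]
    ext ω; simp [Set.mem_diff]; tauto
  have h2 : A i ∩ ⋂ j ∈ S, (A j)ᶜ = (⋂ j ∈ S, (A j)ᶜ) ∩ A i := Set.inter_comm _ _
  rw [h1, h2, ← ENNReal.toReal_add (measure_ne_top μ _) (measure_ne_top μ _),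
    measure_inter_add_diff _ (hA i)]

private lemma LLL_mono {S T : Finset (Fin n)} (hST : S ⊆ T) :
    (μ (⋂ j ∈ T, (A j)ᶜ)).toReal ≤ (μ (⋂ j ∈ S, (A j)ᶜ)).toReal := by
  refine ENNReal.toReal_mono (measure_ne_top μ _) (measure_mono ?_)
  intro ω hω
  simp only [Set.mem_iInter] at hω ⊢
  exact fun j hj => hω j (hST hj)

private lemma LLL_claim (hA : ∀ i, MeasurableSet (A i))
    (Γ : Fin n → Finset (Fin n))
    (x : Fin n → ℝ) (hx : ∀ i, x i ∈ Set.Ico (0 : ℝ) 1)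
    (hind : ∀ i (S : Finset (Fin n)), i ∉ S → (∀ j ∈ S, j ∉ Γ i) →
      μ (A i ∩ ⋂ j ∈ S, (A j)ᶜ) = μ (A i) * μ (⋂ j ∈ S, (A j)ᶜ))
    (hbound : ∀ i, (μ (A i)).toReal ≤ x i * ∏ j ∈ Γ i, (1 - x j)) :
    ∀ S : Finset (Fin n), ∀ i ∉ S,
      (μ (A i ∩ ⋂ j ∈ S, (A j)ᶜ)).toReal ≤ x i * (μ (⋂ j ∈ S, (A j)ᶜ)).toReal := by
  intro S
  induction S using Finset.strongInduction with
  | _ S ih =>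
    intro i hiS
    -- notation
    set f : Finset (Fin n) → ℝ := fun T => (μ (⋂ j ∈ T, (A j)ᶜ)).toReal with hf
    have hf0 : ∀ T, 0 ≤ f T := fun T => ENNReal.toReal_nonneg
    set S₂ : Finset (Fin n) := S \ Γ i with hS₂def
    have hS₂sub : S₂ ⊆ S := Finset.sdiff_subset
    -- Step A : for T ⊆ S ∩ Γ i, f (S₂ ∪ T) ≥ (∏ j ∈ T, (1 - x j)) * f S₂
    have stepA : ∀ T : Finset (Fin n), T ⊆ S ∩ Γ i →
        (∏ j ∈ T, (1 - x j)) * f S₂ ≤ f (S₂ ∪ T) := by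
      intro T
      induction T using Finset.induction with
      | empty => intro _; simp [hf0]
      | @insert j T hjT ihT =>
        intro hsub
        have hjS : j ∈ S ∩ Γ i := hsub (Finset.mem_insert_self j T)
        have hTsub : T ⊆ S ∩ Γ i := fun a ha => hsub (Finset.mem_insert_of_mem ha)
        have hjnot : j ∉ S₂ ∪ T := by
          simp only [Finset.mem_union, not_or]
          refine ⟨?_, hjT⟩
          simp only [hS₂def, Finset.mem_sdiff, not_and, not_not]
          intro _; exact (Finset.mem_inter.mp hjS).2
        have hssub : S₂ ∪ T ⊂ S := by
          have hsub2 : S₂ ∪ T ⊆ S :=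
            Finset.union_subset hS₂sub (hTsub.trans Finset.inter_subset_left)
          exact (Finset.ssubset_iff_of_subset hsub2).mpr ⟨j, (Finset.mem_inter.mp hjS).1, hjnot⟩
        have hclaim := ih _ hssub j hjnot
        have hsplit := LLL_fsplit μ A hA j (S₂ ∪ T)
        have hins : S₂ ∪ insert j T = insert j (S₂ ∪ T) := Finset.union_insert j S₂ T
        have hxj := hx j
        rw [Set.mem_Ico] at hxj
        have h1 : (1 - x j) * f (S₂ ∪ T) ≤ f (insert j (S₂ ∪ T)) := by
          have := hf0 (S₂ ∪ T)
          nlinarith [hclaim, hsplit]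
        have h2 : (∏ k ∈ T, (1 - x k)) * f S₂ ≤ f (S₂ ∪ T) := ihT hTsub
        rw [Finset.prod_insert hjT, hins]
        have hprod : 0 ≤ ∏ k ∈ T, (1 - x k) := by
          refine Finset.prod_nonneg fun k _ => ?_
          have := (hx k).2; linarith
        nlinarith [hf0 S₂]
    have stepA' := stepA (S ∩ Γ i) le_rfl
    have hunion : S₂ ∪ (S ∩ Γ i) = S := by
      ext a; simp [hS₂def, Finset.mem_sdiff, Finset.mem_union, Finset.mem_inter]; tauto
    rw [hunion] at stepA'
    -- independence on S₂
    have hiS₂ : i ∉ S₂ := fun h => hiS (hS₂sub h)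
    have hindS₂ : ∀ j ∈ S₂, j ∉ Γ i := by
      intro j hj; exact (Finset.mem_sdiff.mp hj).2
    have hindep : (μ (A i ∩ ⋂ j ∈ S₂, (A j)ᶜ)).toReal = (μ (A i)).toReal * f S₂ := by
      rw [hind i S₂ hiS₂ hindS₂, ENNReal.toReal_mul]
    -- monotone: A i ∩ N S ⊆ A i ∩ N S₂
    have hmono : (μ (A i ∩ ⋂ j ∈ S, (A j)ᶜ)).toReal ≤ (μ (A i ∩ ⋂ j ∈ S₂, (A j)ᶜ)).toReal := by
      refine ENNReal.toReal_mono (measure_ne_top μ _) (measure_mono ?_)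
      refine Set.inter_subset_inter_right _ ?_
      intro ω hω
      simp only [Set.mem_iInter] at hω ⊢
      exact fun j hj => hω j (hS₂sub hj)
    -- product comparison: ∏ over Γ i ≤ ∏ over S ∩ Γ i
    have hprodle : (∏ j ∈ Γ i, (1 - x j)) ≤ ∏ j ∈ S ∩ Γ i, (1 - x j) := by
      have hsub : S ∩ Γ i ⊆ Γ i := Finset.inter_subset_right
      rw [← Finset.prod_sdiff hsub]
      have h1 : ∏ j ∈ Γ i \ (S ∩ Γ i), (1 - x j) ≤ 1 := by
        refine Finset.prod_le_one (fun k _ => ?_) (fun k _ => ?_)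
        · have := (hx k).2; linarith
        · have := (hx k).1; linarith
      have h2 : 0 ≤ ∏ j ∈ S ∩ Γ i, (1 - x j) := by
        refine Finset.prod_nonneg fun k _ => ?_
        have := (hx k).2; linarith
      nlinarith
    have hxi := hx i
    rw [Set.mem_Ico] at hxi
    calc (μ (A i ∩ ⋂ j ∈ S, (A j)ᶜ)).toReal
        ≤ (μ (A i)).toReal * f S₂ := hmono.trans_eq hindep
      _ ≤ (x i * ∏ j ∈ Γ i, (1 - x j)) * f S₂ :=
          mul_le_mul_of_nonneg_right (hbound i) (hf0 S₂)
      _ ≤ (x i * ∏ j ∈ S ∩ Γ i, (1 - x j)) * f S₂ := by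
          nlinarith [mul_le_mul_of_nonneg_right (mul_le_mul_of_nonneg_left hprodle hxi.1) (hf0 S₂)]
      _ = x i * ((∏ j ∈ S ∩ Γ i, (1 - x j)) * f S₂) := by ring
      _ ≤ x i * f S := mul_le_mul_of_nonneg_left stepA' hxi.1

end LLLaux

/-- Asymmetric Lovász local lemma. -/
theorem asymmetric_LLL
    {Ω : Type*} [MeasurableSpace Ω] (μ : Measure Ω) [IsProbabilityMeasure μ]
    {n : ℕ} (A : Fin n → Set Ω) (hA : ∀ i, MeasurableSet (A i))
    (Γ : Fin n → Finset (Fin n)) (hΓ : ∀ i, i ∉ Γ i)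
    (x : Fin n → ℝ) (hx : ∀ i, x i ∈ Set.Ico (0 : ℝ) 1)
    (hind : ∀ i (S : Finset (Fin n)), i ∉ S → (∀ j ∈ S, j ∉ Γ i) →
      μ (A i ∩ ⋂ j ∈ S, (A j)ᶜ) = μ (A i) * μ (⋂ j ∈ S, (A j)ᶜ))
    (hbound : ∀ i, (μ (A i)).toReal ≤ x i * ∏ j ∈ Γ i, (1 - x j)) :
    (μ (⋂ i, (A i)ᶜ)).toReal ≥ ∏ i, (1 - x i) := by
  have claim := LLL_claim μ A hA Γ x hx hind hbound
  have main : ∀ T : Finset (Fin n),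
      (∏ j ∈ T, (1 - x j)) ≤ (μ (⋂ j ∈ T, (A j)ᶜ)).toReal := by
    intro T
    induction T using Finset.induction with
    | empty => simp
    | @insert j T hjT ihT =>
      have hclaim := claim T j hjT
      have hsplit := LLL_fsplit μ A hA j T
      have hxj := hx j
      rw [Set.mem_Ico] at hxj
      have hprod : 0 ≤ ∏ k ∈ T, (1 - x k) := by
        refine Finset.prod_nonneg fun k _ => ?_
        have := (hx k).2; linarith
      have hfT : (0:ℝ) ≤ (μ (⋂ j ∈ T, (A j)ᶜ)).toReal := ENNReal.toReal_nonneg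
      rw [Finset.prod_insert hjT]
      nlinarith
  have huniv := main Finset.univ
  have heq : (⋂ j ∈ Finset.univ, (A j)ᶜ) = ⋂ i, (A i)ᶜ := by
    simp
  rw [heq] at huniv
  exact huniv
end

section
/- Let |ψ⟩ be the unique ground state of a commuting projector Hamiltonian H = Σ_j P'_j (i.e., the P'_j are pairwise commuting orthogonal projections and ∏_j(1 − P'_j) = |ψ⟩⟨ψ|). Let P, Q be operators such that no P'_j has support intersecting both supp(P) and supp(Q), and such that P commutes with every P'_j whose support is disjoint from supp(P) (automatic from disjoint supports), and similarly for Q. Then ⟨ψ|PQ|ψ⟩ = ⟨ψ|P|ψ⟩⟨ψ|Q|ψ⟩. -/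
open Matrix

/-- An operator `M` on `n` qubits is supported on the set `s` of qubits if its
matrix elements vanish whenever the two basis configurations differ outside `s`,
and depend only on the configurations inside `s`. -/
def SupportedOn {n : ℕ} (s : Finset (Fin n))
    (M : Matrix (Fin n → Fin 2) (Fin n → Fin 2) ℂ) : Prop :=
  (∀ f g, (∃ j ∉ s, f j ≠ g j) → M f g = 0) ∧
  (∀ f g f' g', (∀ j ∈ s, f j = f' j) → (∀ j ∈ s, g j = g' j) →
    (∀ j ∉ s, f j = g j) → (∀ j ∉ s, f' j = g' j) → M f g = M f' g')

/-!
Write `Π = ∏ⱼ (1 - P'ⱼ)` as `A * B`, where `A` collects the factors whose support misses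
`supp P` and `B` the remaining ones, whose supports miss `supp Q`. The factors are commuting
idempotents, so `Π A = Π = B Π`, while `P` commutes with `A` and `Q` with `B`. Hence
`Π P Q Π = Π P A B Q Π = Π P Π Q Π`, and since `Π X Π = ⟨ψ|X|ψ⟩ Π` for a rank-one projection,
comparing traces gives `⟨ψ|PQ|ψ⟩ = ⟨ψ|P|ψ⟩⟨ψ|Q|ψ⟩`.
-/

section Algebra

variable {M : Type*}

theorem sandwich_mul_eq_of_commute_factors [Semigroup M] {A B P Q : M}
    (hA : IsIdempotentElem A) (hB : IsIdempotentElem B) (hAB : Commute A B)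
    (hPA : Commute P A) (hQB : Commute Q B) :
    A * B * (P * Q) * (A * B) = A * B * (P * (A * B) * Q) * (A * B) := by
  have hright : A * B * A = A * B := by rw [mul_assoc, ← hAB.eq, ← mul_assoc, hA.eq]
  have hleft : B * (A * B) = A * B := by rw [← mul_assoc, ← hAB.eq, mul_assoc, hB.eq]
  calc A * B * (P * Q) * (A * B)
      = A * B * A * (P * Q) * (B * (A * B)) := by rw [hright, hleft]
    _ = A * B * ((A * P) * (Q * B)) * (A * B) := by simp only [mul_assoc]
    _ = A * B * (P * (A * B) * Q) * (A * B) := by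
        rw [← hPA.eq, hQB.eq]; simp only [mul_assoc]

variable [Monoid M] {α : Type*}

theorem List.isIdempotentElem_prod_map {f : α → M} (hcomm : ∀ a b, Commute (f a) (f b))
    (hidem : ∀ a, IsIdempotentElem (f a)) (l : List α) :
    IsIdempotentElem (l.map f).prod := by
  induction l with
  | nil => exact IsIdempotentElem.one
  | cons a l ih =>
    rw [List.map_cons, List.prod_cons]
    refine IsIdempotentElem.mul_of_commute ?_ (hidem a) ih
    exact Commute.list_prod_right _ _ fun x hx => by
      obtain ⟨b, -, rfl⟩ := List.mem_map.mp hx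
      exact hcomm a b

theorem List.prod_map_filter_mul_prod_map_filter_not_of_commute {f : α → M}
    (hcomm : ∀ a b, Commute (f a) (f b)) (p : α → Bool) (l : List α) :
    ((l.filter p).map f).prod * ((l.filter fun a => !p a).map f).prod = (l.map f).prod := by
  rw [← List.prod_append, ← List.map_append]
  exact ((List.filter_append_perm p l).map f).prod_eq'
    (List.pairwise_map.mpr (List.pairwise_of_forall hcomm))

theorem List.commute_prod_map {f : α → M} {x : M} {l : List α}
    (h : ∀ a ∈ l, Commute x (f a)) : Commute x (l.map f).prod :=
  Commute.list_prod_right _ _ fun y hy => by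
    obtain ⟨a, ha, rfl⟩ := List.mem_map.mp hy
    exact h a ha

end Algebra

section RankOne

variable {ι R : Type*} [Fintype ι] [CommRing R]

theorem vecMulVec_mul_mul_vecMulVec (u v w x : ι → R) (X : Matrix ι ι R) :
    vecMulVec u v * X * vecMulVec w x = (v ⬝ᵥ X *ᵥ w) • vecMulVec u x := by
  rw [vecMulVec_mul, vecMulVec_mul_vecMulVec, vecMulVec_smul, ← dotProduct_mulVec]

variable [StarRing R]

theorem dotProduct_mulVec_mul_vecMulVec_mul (ψ : ι → R) (X Y : Matrix ι ι R) :
    star ψ ⬝ᵥ (X * vecMulVec ψ (star ψ) * Y) *ᵥ ψ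
      = (star ψ ⬝ᵥ X *ᵥ ψ) * (star ψ ⬝ᵥ Y *ᵥ ψ) := by
  rw [mul_vecMulVec, vecMulVec_mul, vecMulVec_mulVec, op_smul_eq_smul, dotProduct_smul,
    smul_eq_mul, mul_comm, ← dotProduct_mulVec]

theorem dotProduct_mulVec_eq_of_vecMulVec_mul_mul_vecMulVec_eq {ψ : ι → R}
    (hψ : star ψ ⬝ᵥ ψ = 1) {X Y : Matrix ι ι R}
    (h : vecMulVec ψ (star ψ) * X * vecMulVec ψ (star ψ)
      = vecMulVec ψ (star ψ) * Y * vecMulVec ψ (star ψ)) :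
    star ψ ⬝ᵥ X *ᵥ ψ = star ψ ⬝ᵥ Y *ᵥ ψ := by
  rw [vecMulVec_mul_mul_vecMulVec, vecMulVec_mul_mul_vecMulVec] at h
  simpa [trace_smul, dotProduct_comm ψ, hψ] using congrArg trace h

end RankOne

theorem commuting_projector_ground_state_clustering_general {n m : ℕ}
    (P' : Fin m → Matrix (Fin n → Fin 2) (Fin n → Fin 2) ℂ)
    (supp' : Fin m → Finset (Fin n))
    (hproj : ∀ j, (P' j)ᴴ = P' j ∧ P' j * P' j = P' j)
    (hcomm : ∀ j k, P' j * P' k = P' k * P' j)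
    (ψ : (Fin n → Fin 2) → ℂ) (hψ : star ψ ⬝ᵥ ψ = 1)
    (hground : ((List.finRange m).map fun j => 1 - P' j).prod
        = Matrix.vecMulVec ψ (star ψ))
    (P Q : Matrix (Fin n → Fin 2) (Fin n → Fin 2) ℂ)
    (sP sQ : Finset (Fin n))
    (hsep : ∀ j, Disjoint (supp' j) sP ∨ Disjoint (supp' j) sQ)
    (hPcomm : ∀ j, Disjoint (supp' j) sP → P * P' j = P' j * P)
    (hQcomm : ∀ j, Disjoint (supp' j) sQ → Q * P' j = P' j * Q) :
    star ψ ⬝ᵥ (P * Q).mulVec ψ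
      = (star ψ ⬝ᵥ P.mulVec ψ) * (star ψ ⬝ᵥ Q.mulVec ψ) := by
  classical
  set f := fun j => 1 - P' j
  have hf_comm (j k) : Commute (f j) (f k) :=
    ((Commute.one_right _).sub_right ((Commute.one_right _).sub_right (hcomm j k)).symm).symm
  have hf_idem (j) : IsIdempotentElem (f j) := IsIdempotentElem.one_sub (hproj j).2
  set p := fun j => decide (Disjoint (supp' j) sP)
  set A := (((List.finRange m).filter p).map f).prod
  set B := (((List.finRange m).filter fun j => !p j).map f).prod
  have hAB : A * B = vecMulVec ψ (star ψ) :=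
    (List.prod_map_filter_mul_prod_map_filter_not_of_commute hf_comm p _).trans hground
  have hPA : Commute P A := List.commute_prod_map fun j hj =>
    (Commute.one_right P).sub_right (hPcomm j (by simpa [p] using (List.mem_filter.mp hj).2))
  have hQB : Commute Q B := List.commute_prod_map fun j hj =>
    (Commute.one_right Q).sub_right
      (hQcomm j ((hsep j).resolve_left (by simpa [p] using (List.mem_filter.mp hj).2)))
  have hsplit := sandwich_mul_eq_of_commute_factors
    (List.isIdempotentElem_prod_map hf_comm hf_idem _)
    (List.isIdempotentElem_prod_map hf_comm hf_idem _)
    (List.commute_prod_map fun j _ => (List.commute_prod_map fun k _ => hf_comm j k).symm)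
    hPA hQB
  rw [hAB] at hsplit
  rw [dotProduct_mulVec_eq_of_vecMulVec_mul_mul_vecMulVec_eq hψ hsplit,
    dotProduct_mulVec_mul_vecMulVec_mul]

/-- Zero correlation length for the unique ground state of a commuting
projector Hamiltonian: if `∏ⱼ (1 - P'ⱼ) = |ψ⟩⟨ψ|` and no projector `P'ⱼ` has
support intersecting both `supp P` and `supp Q`, and `P` (resp. `Q`) commutes
with every `P'ⱼ` whose support is disjoint from that of `P` (resp. `Q`), then
`⟨ψ|PQ|ψ⟩ = ⟨ψ|P|ψ⟩⟨ψ|Q|ψ⟩`. -/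
theorem commuting_projector_ground_state_clustering {n m : ℕ}
    (P' : Fin m → Matrix (Fin n → Fin 2) (Fin n → Fin 2) ℂ)
    (supp' : Fin m → Finset (Fin n))
    (hsupp' : ∀ j, SupportedOn (supp' j) (P' j))
    (hproj : ∀ j, (P' j)ᴴ = P' j ∧ P' j * P' j = P' j)
    (hcomm : ∀ j k, P' j * P' k = P' k * P' j)
    (ψ : (Fin n → Fin 2) → ℂ) (hψ : star ψ ⬝ᵥ ψ = 1)
    (hground : ((List.finRange m).map fun j => 1 - P' j).prod
        = Matrix.vecMulVec ψ (star ψ))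
    (P Q : Matrix (Fin n → Fin 2) (Fin n → Fin 2) ℂ)
    (sP sQ : Finset (Fin n))
    (hPsupp : SupportedOn sP P) (hQsupp : SupportedOn sQ Q)
    (hsep : ∀ j, Disjoint (supp' j) sP ∨ Disjoint (supp' j) sQ)
    (hPcomm : ∀ j, Disjoint (supp' j) sP → P * P' j = P' j * P)
    (hQcomm : ∀ j, Disjoint (supp' j) sQ → Q * P' j = P' j * Q) :
    star ψ ⬝ᵥ (P * Q).mulVec ψ
      = (star ψ ⬝ᵥ P.mulVec ψ) * (star ψ ⬝ᵥ Q.mulVec ψ) :=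
  commuting_projector_ground_state_clustering_general P' supp' hproj hcomm ψ hψ hground P Q sP sQ
    hsep hPcomm hQcomm
end

section
/- Let Π be a projector onto a code subspace and ρ a state with ρΠ = Πρ = ρ. Let P, Q be operators such that ΠPΠ = tr(ρP)·Π (the Knill–Laflamme condition for supp(P) correctable), and such that operators Π_P̌, Π_Q̌ exist with [P,Π_P̌] = 0 = [Q,Π_Q̌] and Π_P̌Π = Π_Q̌Π = Π_P̌Π_Q̌ = Π. Then tr(ρPQ) = tr(ρP)·tr(ρQ). -/
open Matrix
open scoped ComplexOrder

/-- Correlations factorize exactly for logical states of codes with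
correctable local regions: if `ρ` is a density matrix supported on the code
space projector `C`, the Knill–Laflamme condition `C P C = tr(ρP) C` holds,
and there exist Hermitian operators `CP`, `CQ` commuting with `P`, `Q`
respectively and satisfying `CP * C = CQ * C = CP * CQ = C`, then
`tr(ρPQ) = tr(ρP) tr(ρQ)`. -/
theorem code_state_clustering {D : ℕ}
    (C ρ P Q CP CQ : Matrix (Fin D) (Fin D) ℂ)
    (hCproj : Cᴴ = C ∧ C * C = C)
    (hCP : CPᴴ = CP) (hCQ : CQᴴ = CQ)
    (hρ : ρ.PosSemidef) (hρtr : ρ.trace = 1)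
    (hρC : ρ * C = ρ) (hCρ : C * ρ = ρ)
    (hKL : C * P * C = (ρ * P).trace • C)
    (hPcomm : P * CP = CP * P) (hQcomm : Q * CQ = CQ * Q)
    (h1 : CP * C = C) (h2 : CQ * C = C) (h3 : CP * CQ = C) :
    (ρ * (P * Q)).trace = (ρ * P).trace * (ρ * Q).trace := by
  obtain ⟨hCH, hCC⟩ := hCproj
  have hCCP : C * CP = C := by
    have := congrArg conjTranspose h1
    simpa [Matrix.conjTranspose_mul, hCH, hCP] using this
  -- key sandwich identity
  have key : C * P * Q * C = (ρ * P).trace • (C * Q * C) := by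
    have e1 : C * P = C * P * CP := by
      calc C * P = C * CP * P := by rw [hCCP]
      _ = C * (CP * P) := by rw [mul_assoc]
      _ = C * (P * CP) := by rw [hPcomm]
      _ = C * P * CP := by rw [mul_assoc]
    have e2 : Q * C = CQ * (Q * C) := by
      calc Q * C = Q * (CQ * C) := by rw [h2]
      _ = Q * CQ * C := by rw [mul_assoc]
      _ = CQ * Q * C := by rw [hQcomm]
      _ = CQ * (Q * C) := by rw [mul_assoc]
    calc C * P * Q * C = (C * P) * (Q * C) := by rw [mul_assoc]
      _ = (C * P * CP) * (CQ * (Q * C)) := by rw [← e1, ← e2]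
      _ = (C * P) * (CP * CQ) * (Q * C) := by noncomm_ring
      _ = (C * P) * C * (Q * C) := by rw [h3]
      _ = (C * P * C) * (Q * C) := by rw [mul_assoc]
      _ = ((ρ * P).trace • C) * (Q * C) := by rw [hKL]
      _ = (ρ * P).trace • (C * (Q * C)) := by rw [Matrix.smul_mul]
      _ = (ρ * P).trace • (C * Q * C) := by rw [mul_assoc]
  have hρCC : ρ = C * ρ * C := by rw [hCρ, hρC]
  have sandwich : ∀ A : Matrix (Fin D) (Fin D) ℂ,
      (ρ * (C * A * C)).trace = (ρ * A).trace := by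
    intro A
    calc (ρ * (C * A * C)).trace
        = ((C * A * C) * ρ).trace := Matrix.trace_mul_comm _ _
      _ = ((C * A) * (C * ρ)).trace := by rw [mul_assoc]
      _ = ((C * A) * ρ).trace := by rw [hCρ]
      _ = (ρ * (C * A)).trace := Matrix.trace_mul_comm _ _
      _ = ((ρ * C) * A).trace := by rw [← mul_assoc]
      _ = (ρ * A).trace := by rw [hρC]
  calc (ρ * (P * Q)).trace = (ρ * (C * (P * Q) * C)).trace := (sandwich _).symm
    _ = (ρ * (C * P * Q * C)).trace := by rw [show C * (P * Q) * C = C * P * Q * C from by noncomm_ring]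
    _ = (ρ * ((ρ * P).trace • (C * Q * C))).trace := by rw [key]
    _ = (ρ * P).trace * (ρ * (C * Q * C)).trace := by
        rw [Matrix.mul_smul, Matrix.trace_smul]; rfl
    _ = (ρ * P).trace * (ρ * Q).trace := by rw [sandwich]
end
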